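/- arXiv:2410.05603 — 2 statements merged into one kernel-verified Lean document; each statement's English description precedes it below -/
import Mathlib

section
/- Let g₁, …, g_K : ℝⁿ → ℝ^d be K tasks and g̃₁, …, g̃_K : ℝⁿ → ℝ^d approximate implementations satisfying ‖g̃_k(x⁽ʲ⁾) − g_k(x⁽ʲ⁾)‖₁ ≤ ε for all j ∈ {1, …, m} and k ∈ {1, …, K}, where ε ≥ 0. Let t : {1, …, m} → {1, …, K} be a task assignment with labels y⁽ʲ⁾ = g_{t(j)}(x⁽ʲ⁾), let C > 0, and assume the separation condition: for every j and every k ≠ t(j), ‖g_k(x⁽ʲ⁾) − y⁽ʲ⁾‖₁ ≥ 1/C + ε. Then for every task k, the averaged soft indicator A_k = (1/m) Σ_{j=1}^m ReLU(1 − C·‖g̃_k(x⁽ʲ⁾) − y⁽ʲ⁾‖₁) satisfies |A_k − m_k/m| ≤ C·ε, where m_k = |{j : t(j) = k}|. -/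
/-- ReLU function on ℝ. -/
noncomputable def ReLU (x : ℝ) : ℝ := max x 0

/-- ℓ1-norm of a vector in ℝ^d. -/
noncomputable def l1Norm {d : ℕ} (z : Fin d → ℝ) : ℝ := ∑ i, |z i|

lemma l1Norm_nonneg {d : ℕ} (z : Fin d → ℝ) : 0 ≤ l1Norm z :=
  Finset.sum_nonneg fun i _ => abs_nonneg _

lemma l1Norm_sub_comm {d : ℕ} (a b : Fin d → ℝ) : l1Norm (a - b) = l1Norm (b - a) := by
  unfold l1Norm
  exact Finset.sum_congr rfl fun i _ => by simp [abs_sub_comm]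

lemma l1Norm_triangle {d : ℕ} (a b c : Fin d → ℝ) :
    l1Norm (a - c) ≤ l1Norm (a - b) + l1Norm (b - c) := by
  unfold l1Norm
  rw [← Finset.sum_add_distrib]
  refine Finset.sum_le_sum fun i _ => ?_
  have : (a - c) i = (a - b) i + (b - c) i := by simp [sub_eq_add_neg]
  rw [this]; exact abs_add_le _ _

/-- Robust version: with tasks `g k` implemented approximately by `g̃ k` within
ℓ1-error `ε` on the inputs, labels `y j = g (t j) (x j)`, and the separation
condition `‖g k (x j) - y j‖₁ ≥ 1/C + ε` for `k ≠ t j`, the averaged soft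
indicator `A k = (1/m) ∑ j ReLU (1 - C * ‖g̃ k (x j) - y j‖₁)` deviates from the
true proportion `m_k / m` by at most `C * ε`. -/
theorem averaged_soft_indicator_approx_proportion
    (K m n d : ℕ)
    (g gtilde : Fin K → (Fin n → ℝ) → (Fin d → ℝ))
    (x : Fin m → (Fin n → ℝ))
    (ε : ℝ) (hε : 0 ≤ ε)
    (happrox : ∀ (j : Fin m) (k : Fin K), l1Norm (gtilde k (x j) - g k (x j)) ≤ ε)
    (t : Fin m → Fin K)
    (y : Fin m → (Fin d → ℝ))
    (hy : ∀ j, y j = g (t j) (x j))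
    (C : ℝ) (hC : 0 < C)
    (hsep : ∀ j, ∀ k, k ≠ t j → 1 / C + ε ≤ l1Norm (g k (x j) - y j)) :
    ∀ k : Fin K,
      |(1 / (m : ℝ)) * (∑ j, ReLU (1 - C * l1Norm (gtilde k (x j) - y j)))
          - ((Finset.univ.filter fun j => t j = k).card : ℝ) / (m : ℝ)|
        ≤ C * ε := by
  intro k
  have hCε : 0 ≤ C * ε := mul_nonneg hC.le hε
  rcases Nat.eq_zero_or_pos m with hm | hm
  · subst hm
    simp [Finset.filter_eq_empty_iff, hCε]
  have hmpos : (0 : ℝ) < m := by exact_mod_cast hm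
  -- pointwise bound
  have key : ∀ j : Fin m,
      |ReLU (1 - C * l1Norm (gtilde k (x j) - y j)) - (if t j = k then (1:ℝ) else 0)|
        ≤ C * ε := by
    intro j
    by_cases htj : t j = k
    · simp only [htj, if_pos rfl]
      have hnorm : l1Norm (gtilde k (x j) - y j) ≤ ε := by
        rw [hy j, htj]; exact happrox j k
      have hnn : 0 ≤ l1Norm (gtilde k (x j) - y j) := l1Norm_nonneg _
      have h1 : ReLU (1 - C * l1Norm (gtilde k (x j) - y j)) ≤ 1 := by
        unfold ReLU
        have : 1 - C * l1Norm (gtilde k (x j) - y j) ≤ 1 := by nlinarith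
        exact max_le this zero_le_one
      have h2 : 1 - C * ε ≤ ReLU (1 - C * l1Norm (gtilde k (x j) - y j)) := by
        unfold ReLU
        have : 1 - C * ε ≤ 1 - C * l1Norm (gtilde k (x j) - y j) := by nlinarith
        exact le_max_of_le_left this
      rw [abs_le]; simp only [if_true]; constructor <;> linarith
    · simp only [if_neg htj]
      have hsep' := hsep j k (Ne.symm htj)
      have htri : l1Norm (g k (x j) - y j) ≤
          l1Norm (g k (x j) - gtilde k (x j)) + l1Norm (gtilde k (x j) - y j) :=
        l1Norm_triangle _ _ _
      have happ : l1Norm (g k (x j) - gtilde k (x j)) ≤ ε := by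
        rw [l1Norm_sub_comm]; exact happrox j k
      have hbig : 1 / C ≤ l1Norm (gtilde k (x j) - y j) := by linarith
      have hzero : ReLU (1 - C * l1Norm (gtilde k (x j) - y j)) = 0 := by
        unfold ReLU
        have h1C : C * (1 / C) = 1 := by field_simp
        have : 1 - C * l1Norm (gtilde k (x j) - y j) ≤ 0 := by nlinarith
        exact max_eq_right this
      rw [hzero]; simpa using hCε
  -- card as sum
  have hcard : ((Finset.univ.filter fun j => t j = k).card : ℝ)
      = ∑ j : Fin m, (if t j = k then (1:ℝ) else 0) := by
    rw [Finset.card_filter]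
    push_cast
    rfl
  have hsum : |∑ j : Fin m, (ReLU (1 - C * l1Norm (gtilde k (x j) - y j))
      - (if t j = k then (1:ℝ) else 0))| ≤ m * (C * ε) := by
    calc |∑ j : Fin m, (ReLU (1 - C * l1Norm (gtilde k (x j) - y j))
        - (if t j = k then (1:ℝ) else 0))|
        ≤ ∑ j : Fin m, |ReLU (1 - C * l1Norm (gtilde k (x j) - y j))
          - (if t j = k then (1:ℝ) else 0)| := Finset.abs_sum_le_sum_abs _ _
      _ ≤ ∑ _j : Fin m, C * ε := Finset.sum_le_sum fun j _ => key j
      _ = m * (C * ε) := by simp [Finset.sum_const, mul_comm]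
  rw [hcard]
  have heq : (1 / (m : ℝ)) * (∑ j, ReLU (1 - C * l1Norm (gtilde k (x j) - y j)))
      - (∑ j : Fin m, (if t j = k then (1:ℝ) else 0)) / (m : ℝ)
      = (∑ j : Fin m, (ReLU (1 - C * l1Norm (gtilde k (x j) - y j))
          - (if t j = k then (1:ℝ) else 0))) / m := by
    rw [Finset.sum_sub_distrib]
    field_simp
  rw [heq, abs_div, abs_of_pos hmpos, div_le_iff₀ hmpos]
  linarith [hsum]
end

section
/- Let R > 0, L ≥ 0, and ε > 0, and let g : [−R, R] → ℝ be L-Lipschitz. Then there exist M ∈ ℕ with M ≤ ⌈4LR/ε⌉ + 2 and reals c₁, …, c_M, a₁, …, a_M, b₁, …, b_M such that sup_{x ∈ [−R, R]} |g(x) − Σ_{m=1}^M c_m · ReLU(a_m·x + b_m)| ≤ ε. -/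
private lemma convex_abs_bound (L ε δ u G0 G1 : ℝ) (hδpos : 0 < δ) (hLδ : L * δ ≤ ε)
    (hL : 0 ≤ L) (hu0 : 0 ≤ u) (huδ : u ≤ δ)
    (hb0 : |G0| ≤ L * u) (hb1 : |G1| ≤ L * (δ - u)) :
    |(1 - u / δ) * G0 + (u / δ) * G1| ≤ ε := by
  have ht0 : 0 ≤ u / δ := by positivity
  have ht1 : u / δ ≤ 1 := by rw [div_le_one hδpos]; exact huδ
  have step1 : |(1 - u / δ) * G0 + (u / δ) * G1|
      ≤ (1 - u / δ) * (L * u) + (u / δ) * (L * (δ - u)) := by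
    refine (abs_add_le _ _).trans ?_
    rw [abs_mul, abs_mul, abs_of_nonneg (by linarith : (0:ℝ) ≤ 1 - u / δ),
      abs_of_nonneg ht0]
    have g1 : (1 - u / δ) * |G0| ≤ (1 - u / δ) * (L * u) :=
      mul_le_mul_of_nonneg_left hb0 (by linarith)
    have g2 : (u / δ) * |G1| ≤ (u / δ) * (L * (δ - u)) :=
      mul_le_mul_of_nonneg_left hb1 ht0
    linarith
  refine step1.trans ?_
  have h2 : (1 - u / δ) * (L * u) + (u / δ) * (L * (δ - u))
      = 2 * L * (u * (δ - u)) / δ := by field_simp; ring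
  rw [h2, div_le_iff₀ hδpos]
  nlinarith [mul_nonneg hL (sq_nonneg (δ - 2*u)), mul_pos hδpos hδpos, sq_nonneg δ]

/-- Any `L`-Lipschitz function `g : [-R, R] → ℝ` can be `ε`-approximated uniformly
on `[-R, R]` by a sum of at most `⌈4LR/ε⌉ + 2` ReLUs of affine functions. -/
theorem lipschitz_approx_by_sum_of_relus
    (R L ε : ℝ) (hR : 0 < R) (hL : 0 ≤ L) (hε : 0 < ε)
    (g : ℝ → ℝ)
    (hg : ∀ x ∈ Set.Icc (-R) R, ∀ y ∈ Set.Icc (-R) R, |g x - g y| ≤ L * |x - y|) :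
    ∃ (M : ℕ), M ≤ ⌈4 * L * R / ε⌉₊ + 2 ∧
      ∃ (c a b : Fin M → ℝ),
        ∀ x ∈ Set.Icc (-R) R,
          |g x - ∑ m, c m * ReLU (a m * x + b m)| ≤ ε := by
  rcases eq_or_lt_of_le hL with hL0 | hLpos
  · -- L = 0 : g is constant on the interval
    refine ⟨1, by omega, fun _ => g (-R), fun _ => 0, fun _ => 1, ?_⟩
    intro x hx
    have h1 : ReLU ((0:ℝ) * x + 1) = 1 := by simp [ReLU]
    have hRm : (-R : ℝ) ∈ Set.Icc (-R) R := ⟨le_refl _, by linarith⟩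
    have := hg x hx (-R) hRm
    rw [← hL0] at this
    simp only [Fin.sum_univ_one, h1, mul_one]
    nlinarith [this]
  · -- L > 0
    set N := ⌈2 * L * R / ε⌉₊ with hNdef
    have hNpos : 0 < N := Nat.ceil_pos.mpr (by positivity)
    have hNR : (N : ℝ) ≥ 2 * L * R / ε := Nat.le_ceil _
    have hNcast : (0:ℝ) < N := by exact_mod_cast hNpos
    -- step size
    set δ : ℝ := 2 * R / N with hδdef
    have hδpos : 0 < δ := by positivity
    have hLδ : L * δ ≤ ε := by
      have h1 : 2 * L * R ≤ (N:ℝ) * ε := by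
        rw [ge_iff_le, div_le_iff₀ hε] at hNR; exact hNR
      rw [hδdef, ← mul_div_assoc, div_le_iff₀ hNcast]
      nlinarith
    -- grid points
    set p : ℕ → ℝ := fun k => -R + k * δ with hpdef
    have hpmono : ∀ {k l : ℕ}, k ≤ l → p k ≤ p l := by
      intro k l hkl
      have : (k : ℝ) ≤ l := by exact_mod_cast hkl
      simp only [hpdef]
      nlinarith
    have hpN : p N = R := by
      simp only [hpdef, hδdef]
      field_simp
      ring
    have hp0 : p 0 = -R := by simp [hpdef]
    have hpIcc : ∀ k : ℕ, k ≤ N → p k ∈ Set.Icc (-R) R := by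
      intro k hk
      constructor
      · have : (0:ℝ) ≤ k * δ := by positivity
        simp only [hpdef]; linarith
      · rw [← hpN]; exact hpmono hk
    -- slopes
    set d : ℕ → ℝ := fun k => (g (p (k+1)) - g (p k)) / δ with hddef
    -- the coefficient functions, as functions of ℕ
    set C : ℕ → ℝ := fun i => if i = 0 then g (-R) else if i ≤ N then d (i - 1) else -d (i - 1 - N) with hCdef
    set A : ℕ → ℝ := fun i => if i = 0 then 0 else 1 with hAdef
    set B : ℕ → ℝ := fun i => if i = 0 then 1 else if i ≤ N then -(p (i - 1)) else -(p (i - N)) with hBdef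
    clear_value N δ p d C A B
    refine ⟨1 + N + N, ?_, fun m => C m.val, fun m => A m.val, fun m => B m.val, ?_⟩
    · -- size bound : 1 + N + N ≤ ⌈4LR/ε⌉₊ + 2
      have h1 : (N : ℝ) < 2 * L * R / ε + 1 := by
        rw [hNdef]; exact Nat.ceil_lt_add_one (by positivity)
      have h2 : 4 * L * R / ε ≤ (⌈4 * L * R / ε⌉₊ : ℝ) := Nat.le_ceil _
      have h3 : (N : ℝ) + N < (⌈4 * L * R / ε⌉₊ : ℝ) + 2 := by
        have : 2 * L * R / ε + 2 * L * R / ε = 4 * L * R / ε := by ring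
        nlinarith
      have h4 : N + N < ⌈4 * L * R / ε⌉₊ + 2 := by exact_mod_cast h3
      omega
    intro x hx
    obtain ⟨hx1, hx2⟩ := hx
    -- rewrite the sum
    have hsum : ∑ m : Fin (1 + N + N), C m.val * ReLU (A m.val * x + B m.val)
        = g (-R) + (∑ i ∈ Finset.range N, d i * ReLU (x - p i)
          + ∑ i ∈ Finset.range N, (-d i) * ReLU (x - p (i+1))) := by
      rw [Fin.sum_univ_eq_sum_range (fun i => C i * ReLU (A i * x + B i))]
      rw [Finset.sum_range_add, Finset.sum_range_add]
      have e0 : ∑ i ∈ Finset.range 1, C i * ReLU (A i * x + B i) = g (-R) := by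
        simp [hCdef, hAdef, hBdef, ReLU]
      have e1 : ∀ i ∈ Finset.range N, C (1 + i) * ReLU (A (1 + i) * x + B (1 + i))
          = d i * ReLU (x - p i) := by
        intro i hi
        simp only [Finset.mem_range] at hi
        have hne : 1 + i ≠ 0 := by omega
        have hle : 1 + i ≤ N := by omega
        simp only [hCdef, hAdef, hBdef, if_neg hne, if_pos hle]
        have : 1 + i - 1 = i := by omega
        rw [this]
        ring_nf
      have e2 : ∀ i ∈ Finset.range N, C (1 + N + i) * ReLU (A (1 + N + i) * x + B (1 + N + i))
          = (-d i) * ReLU (x - p (i+1)) := by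
        intro i hi
        simp only [Finset.mem_range] at hi
        have hne : 1 + N + i ≠ 0 := by omega
        have hle : ¬ (1 + N + i ≤ N) := by omega
        simp only [hCdef, hAdef, hBdef, if_neg hne, if_neg hle]
        have h1 : 1 + N + i - 1 - N = i := by omega
        have h2 : 1 + N + i - N = i + 1 := by omega
        rw [h1, h2]
        ring_nf
      rw [e0, Finset.sum_congr rfl e1, Finset.sum_congr rfl e2, add_assoc]
    rw [hsum]
    -- telescoping identity for g x
    have htel : g x - g (-R) = ∑ i ∈ Finset.range N,
        (g (min x (p (i+1))) - g (min x (p i))) := by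
      rw [Finset.sum_range_sub (fun i => g (min x (p i))) N]
      have hmN : min x (p N) = x := by rw [hpN]; exact min_eq_left hx2
      have hm0 : min x (p 0) = -R := by rw [hp0]; exact min_eq_right hx1
      rw [hmN, hm0]
    -- combine into one sum of local errors
    have hrw : g x - (g (-R) + (∑ i ∈ Finset.range N, d i * ReLU (x - p i)
          + ∑ i ∈ Finset.range N, (-d i) * ReLU (x - p (i+1))))
        = ∑ i ∈ Finset.range N, ((g (min x (p (i+1))) - g (min x (p i)))
            - (d i * ReLU (x - p i) - d i * ReLU (x - p (i+1)))) := by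
      have e : ∀ i ∈ Finset.range N, ((g (min x (p (i+1))) - g (min x (p i)))
            - (d i * ReLU (x - p i) - d i * ReLU (x - p (i+1))))
          = (g (min x (p (i+1))) - g (min x (p i)))
            - (d i * ReLU (x - p i) + (-d i) * ReLU (x - p (i+1))) := by
        intro i _; ring
      rw [Finset.sum_congr rfl e, Finset.sum_sub_distrib, ← htel, Finset.sum_add_distrib]
      ring
    rw [show g x - (g (-R) + (∑ i ∈ Finset.range N, d i * ReLU (x - p i)
          + ∑ i ∈ Finset.range N, (-d i) * ReLU (x - p (i+1)))) = _ from hrw]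
    -- find the active interval index j
    set j : ℕ := min (N - 1) ⌊(x + R) / δ⌋₊ with hjdef
    clear_value j
    have hjlt : j < N := by
      have : j ≤ N - 1 := by rw [hjdef]; exact min_le_left _ _
      omega
    have hpjx : p j ≤ x := by
      have h1 : (j : ℝ) ≤ ⌊(x + R) / δ⌋₊ := by
        rw [hjdef]; exact_mod_cast min_le_right (N - 1) ⌊(x + R) / δ⌋₊
      have h2 : (⌊(x + R) / δ⌋₊ : ℝ) ≤ (x + R) / δ :=
        Nat.floor_le (div_nonneg (by linarith) hδpos.le)
      have h3 : (j : ℝ) * δ ≤ x + R := by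
        have := h1.trans h2
        rw [le_div_iff₀ hδpos] at this
        linarith [this]
      simp only [hpdef]; linarith
    have hxpj : x ≤ p (j + 1) := by
      rcases le_or_gt (N - 1) ⌊(x + R) / δ⌋₊ with hc | hc
      · have hj' : j = N - 1 := by simp [hjdef, min_eq_left hc]
        have : (j : ℝ) + 1 = N := by
          rw [hj']; push_cast [Nat.cast_sub hNpos]; ring
        have hpj1 : p (j + 1) = p N := by
          simp only [hpdef]; push_cast; rw [this]
        rw [hpj1, hpN]; exact hx2
      · have hj' : j = ⌊(x + R) / δ⌋₊ := by
          simp [hjdef, min_eq_right (le_of_lt hc)]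
        have h2 : (x + R) / δ < ⌊(x + R) / δ⌋₊ + 1 := Nat.lt_floor_add_one _
        have h3 : x + R < ((j:ℝ) + 1) * δ := by
          rw [hj']
          rw [div_lt_iff₀ hδpos] at h2
          linarith [h2]
        simp only [hpdef]; push_cast; linarith
    -- all terms vanish except the j-th
    have hzero : ∀ i ∈ Finset.range N, i ≠ j →
        ((g (min x (p (i+1))) - g (min x (p i)))
          - (d i * ReLU (x - p i) - d i * ReLU (x - p (i+1)))) = 0 := by
      intro i hi hij
      rcases lt_or_gt_of_ne hij with hlt | hgt
      · -- i < j : x ≥ p (i+1)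
        have h1 : p (i + 1) ≤ x := le_trans (hpmono (by omega)) hpjx
        have h0 : p i ≤ x := le_trans (hpmono (by omega : i ≤ i + 1)) h1
        have hm1 : min x (p (i+1)) = p (i+1) := min_eq_right h1
        have hm0 : min x (p i) = p i := min_eq_right h0
        have hr1 : ReLU (x - p i) = x - p i := max_eq_left (by linarith)
        have hr2 : ReLU (x - p (i+1)) = x - p (i+1) := max_eq_left (by linarith)
        rw [hm1, hm0, hr1, hr2]
        have hdiff : p (i+1) - p i = δ := by simp only [hpdef]; push_cast; ring
        have e1 : d i * (x - p i) - d i * (x - p (i+1)) = d i * δ := by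
          rw [← mul_sub]; congr 1; linarith
        rw [e1]
        simp only [hddef]
        rw [div_mul_cancel₀ _ (ne_of_gt hδpos)]
        ring
      · -- i > j : x ≤ p i
        have h0 : x ≤ p i := le_trans hxpj (hpmono (by omega))
        have h1 : x ≤ p (i+1) := le_trans h0 (hpmono (by omega : i ≤ i + 1))
        have hm1 : min x (p (i+1)) = x := min_eq_left h1
        have hm0 : min x (p i) = x := min_eq_left h0
        have hr1 : ReLU (x - p i) = 0 := max_eq_right (by linarith)
        have hr2 : ReLU (x - p (i+1)) = 0 := max_eq_right (by linarith)
        rw [hm1, hm0, hr1, hr2]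
        ring
    rw [Finset.sum_eq_single_of_mem j (Finset.mem_range.mpr hjlt) hzero]
    -- bound the remaining term
    have hm1 : min x (p (j+1)) = x := min_eq_left hxpj
    have hm0 : min x (p j) = p j := min_eq_right hpjx
    have hr1 : ReLU (x - p j) = x - p j := max_eq_left (by linarith)
    have hr2 : ReLU (x - p (j+1)) = 0 := max_eq_right (by linarith)
    rw [hm1, hm0, hr1, hr2]
    set u : ℝ := x - p j with hudef
    clear_value u
    have hu0 : 0 ≤ u := by linarith
    have huδ : u ≤ δ := by
      have hdiff : p (j+1) - p j = δ := by simp only [hpdef]; push_cast; ring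
      simp only [hudef]; linarith
    have hpjmem : p j ∈ Set.Icc (-R) R := hpIcc j (by omega)
    have hpj1mem : p (j+1) ∈ Set.Icc (-R) R := hpIcc (j+1) (by omega)
    have hb0 : |g x - g (p j)| ≤ L * u := by
      have := hg x ⟨hx1, hx2⟩ (p j) hpjmem
      rw [← hudef] at this
      rwa [abs_of_nonneg hu0] at this
    have hb1 : |g x - g (p (j+1))| ≤ L * (δ - u) := by
      have := hg x ⟨hx1, hx2⟩ (p (j+1)) hpj1mem
      have habs : |x - p (j+1)| = δ - u := by
        rw [abs_of_nonpos (by linarith)]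
        have hdiff : p (j+1) - p j = δ := by simp only [hpdef]; push_cast; ring
        linarith [hudef]
      rwa [habs] at this
    have hkey : g x - g (p j) - (d j * u - d j * 0)
        = (1 - u / δ) * (g x - g (p j)) + (u / δ) * (g x - g (p (j + 1))) := by
      simp only [hddef]
      field_simp
      ring
    rw [hkey]
    exact convex_abs_bound L ε δ u _ _ hδpos hLδ hL hu0 huδ hb0 hb1
end
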